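/- Let (a_i)_{i≥1}, (b_i)_{i≥0}, (λ_i)_{i≥1}, (c_i)_{i≥1} be sequences of complex numbers satisfying the type R_II conditions, and assume that for all n, r, s ≥ 0 the family (wt(p))_{p∈Γ_{n,r,s}} is summable in ℂ. Suppose ℒ : W → ℂ is a ℂ-linear map such that ℒ(x^n) = Σ_{p∈Γ_n} wt(p) for all n ≥ 0, ℒ(Q_n(x)) = 0 for all n ≥ 1, ℒ(x·Q_{n+1}(x)) = 0 for all n ≥ 1, and ℒ(x·Q_1(x)) = Σ_{p∈Γ_{1,1}} wt(p). Then for all n, r, s ≥ 0, ℒ(x^n P_r(x) Q_s(x)) = Σ_{p∈Γ_{n,r,s}} wt(p). -/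

import Mathlib

open Polynomial

/-- Steps of an `R_II` path: up, horizontal, down, vertical-down, backward-down. -/
inductive RStep : Type
  | U | H | D | V | B
  deriving DecidableEq

/-- Displacement of each step. -/
def RStep.disp : RStep → ℤ × ℤ
  | .U => (1, 1)
  | .H => (1, 0)
  | .D => (1, -1)
  | .V => (0, -1)
  | .B => (-1, -1)

/-- End point of a lattice path starting at `start` with the given list of steps. -/
def endPt (start : ℤ × ℤ) : List RStep → ℤ × ℤ
  | [] => start
  | s :: l => endPt (start + s.disp) l

/-- All intermediate heights along the path (starting at height `h`) are nonnegative,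
so that the points of the path lie in `ℤ × ℤ≥0`. -/
def heightsNonneg (h : ℤ) : List RStep → Prop
  | [] => True
  | s :: l => 0 ≤ h + s.disp.2 ∧ heightsNonneg (h + s.disp.2) l

/-- `Gamma n r s` is the set of `R_II` paths from `(0, r)` to `(n, s)`. -/
def Gamma (n r s : ℕ) : Set (List RStep) :=
  {l | heightsNonneg (r : ℤ) l ∧ endPt (0, (r : ℤ)) l = ((n : ℤ), (s : ℤ))}

/-- The list of all points visited by a path. -/
def pathPoints (start : ℤ × ℤ) : List RStep → List (ℤ × ℤ)
  | [] => [start]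
  | s :: l => start :: pathPoints (start + s.disp) l

/-- `RGamma n r s` is the set of restricted `R_II` paths from `(0, r)` to `(n, s)`:
paths in `Gamma n r s` whose points have first coordinate `n` only at the final point. -/
def RGamma (n r s : ℕ) : Set (List RStep) :=
  {l | l ∈ Gamma n r s ∧ ∀ p ∈ (pathPoints (0, (r : ℤ)) l).dropLast, p.1 ≠ (n : ℤ)}

/-- Weight of a single step starting at height `h`:
`1` for `U`, `b_i` for `H`, `λ_i` for `D`, `a_i` for `V`, `c_i` for `B` starting at height `i`. -/
def stepWt {R : Type*} [CommRing R] (a b lam c : ℕ → R) (h : ℤ) : RStep → R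
  | .U => 1
  | .H => b h.toNat
  | .D => lam h.toNat
  | .V => a h.toNat
  | .B => c h.toNat

/-- Weight of a path starting at height `h`: the product of the weights of its steps. -/
def pathWt {R : Type*} [CommRing R] (a b lam c : ℕ → R) : ℤ → List RStep → R
  | _, [] => 1
  | h, s :: l => stepWt a b lam c h s * pathWt a b lam c (h + s.disp.2) l
/-- The polynomials `P_n` defined by `P_0 = 1`, `P_1 = x - b_0` and
`P_{n+1} = (x - b_n) P_n - (c_n x² + a_n x + λ_n) P_{n-1}` (so `P_{-1} = 0`). -/
noncomputable def Ppoly {R : Type*} [CommRing R] (a b lam c : ℕ → R) : ℕ → Polynomial R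
  | 0 => 1
  | 1 => X - C (b 0)
  | n + 2 =>
      (X - C (b (n + 1))) * Ppoly a b lam c (n + 1) -
        (C (c (n + 1)) * X ^ 2 + C (a (n + 1)) * X + C (lam (n + 1))) * Ppoly a b lam c n

/-- `d_m(x) = ∏_{i=1}^m (c_i x² + a_i x + λ_i)`, with `d_0 = 1`. -/
noncomputable def dpoly {R : Type*} [CommRing R] (a lam c : ℕ → R) (m : ℕ) : Polynomial R :=
  ∏ i ∈ Finset.range m, (C (c (i + 1)) * X ^ 2 + C (a (i + 1)) * X + C (lam (i + 1)))
/-- `Q_m = P_m / d_m` as an element of the field `RatFunc ℂ`. -/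
noncomputable def Qfun (a b lam c : ℕ → ℂ) (m : ℕ) : RatFunc ℂ :=
  algebraMap (Polynomial ℂ) (RatFunc ℂ) (Ppoly a b lam c m) /
    algebraMap (Polynomial ℂ) (RatFunc ℂ) (dpoly a lam c m)

/-- `W`, the ℂ-subspace of `RatFunc ℂ` spanned by `{x^n Q_m : n, m ≥ 0}`. -/
noncomputable def Wspace (a b lam c : ℕ → ℂ) : Submodule ℂ (RatFunc ℂ) :=
  Submodule.span ℂ {f | ∃ n m : ℕ, f = RatFunc.X ^ n * Qfun a b lam c m}

/-- `W'`, the ℂ-subspace of `RatFunc ℂ` spanned by `{x^n / d_m : n, m ≥ 0}`. -/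
noncomputable def W'space (a lam c : ℕ → ℂ) : Submodule ℂ (RatFunc ℂ) :=
  Submodule.span ℂ
    {f | ∃ n m : ℕ, f = RatFunc.X ^ n / algebraMap (Polynomial ℂ) (RatFunc ℂ) (dpoly a lam c m)}

/-- The type `R_II` conditions: for every `n ≥ 1`, `c_n ≠ 0` and `P_n(z) ≠ 0` for every
root `z` of `c_n x² + a_n x + λ_n`. -/
def RIIConds (a b lam c : ℕ → ℂ) : Prop :=
  ∀ n : ℕ, 1 ≤ n → c n ≠ 0 ∧
    ∀ z : ℂ, c n * z ^ 2 + a n * z + lam n = 0 →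
      Polynomial.eval z (Ppoly a b lam c n) ≠ 0

namespace RIIAux

/-- Generalized `Gamma` with integer indices. -/
def GammaZ (n r s : ℤ) : Set (List RStep) :=
  {l | heightsNonneg r l ∧ endPt (0, r) l = (n, s)}

lemma Gamma_eq_GammaZ (n r s : ℕ) : Gamma n r s = GammaZ n r s := rfl

lemma endPt_translate (p q : ℤ × ℤ) (l : List RStep) :
    endPt (p + q) l = endPt p l + q := by
  induction l generalizing p with
  | nil => rfl
  | cons st l ih =>
      show endPt (p + q + st.disp) l = endPt (p + st.disp) l + q
      rw [show p + q + st.disp = p + st.disp + q from by ring, ih]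

lemma endPt_snd_nonneg {r : ℤ} (hr : 0 ≤ r) (x : ℤ) {l : List RStep}
    (hl : heightsNonneg r l) : 0 ≤ (endPt (x, r) l).2 := by
  induction l generalizing x r with
  | nil => exact hr
  | cons st l ih =>
      obtain ⟨h1, h2⟩ := hl
      show 0 ≤ (endPt ((x, r) + st.disp) l).2
      have hx : (x, r) + st.disp = (x + st.disp.1, r + st.disp.2) := rfl
      rw [hx]
      exact ih h1 _ h2

lemma endPt_sub_mono (p : ℤ × ℤ) (l : List RStep) :
    p.1 - p.2 ≤ (endPt p l).1 - (endPt p l).2 := by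
  induction l generalizing p with
  | nil => exact le_refl _
  | cons st l ih =>
      refine le_trans ?_ (ih (p + st.disp))
      have : (p + st.disp).1 = p.1 + st.disp.1 := rfl
      have h2 : (p + st.disp).2 = p.2 + st.disp.2 := rfl
      rw [this, h2]
      cases st <;> simp [RStep.disp] <;> omega

lemma cons_mem_GammaZ {st : RStep} {l : List RStep} {n r s : ℤ} :
    (st :: l) ∈ GammaZ n r s ↔
      0 ≤ r + st.disp.2 ∧ l ∈ GammaZ (n - st.disp.1) (r + st.disp.2) s := by
  have hsplit : ((0 : ℤ), r) + st.disp = ((0 : ℤ), r + st.disp.2) + (st.disp.1, 0) := by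
    ext <;> simp
  have key : endPt ((0 : ℤ), r) (st :: l) = (n, s) ↔
      endPt ((0 : ℤ), r + st.disp.2) l = (n - st.disp.1, s) := by
    show endPt (((0 : ℤ), r) + st.disp) l = (n, s) ↔ _
    rw [hsplit, endPt_translate]
    constructor
    · intro h
      have h1 := congrArg Prod.fst h
      have h2 := congrArg Prod.snd h
      simp at h1 h2
      ext <;> simp <;> omega
    · intro h
      rw [h]
      ext <;> simp
  constructor
  · rintro ⟨⟨hh1, hh2⟩, hend⟩
    exact ⟨hh1, hh2, key.mp hend⟩
  · rintro ⟨hh1, hh2, hend⟩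
    exact ⟨⟨hh1, hh2⟩, key.mpr hend⟩

lemma endPt_append_singleton (p : ℤ × ℤ) (l : List RStep) (st : RStep) :
    endPt p (l ++ [st]) = endPt p l + st.disp := by
  induction l generalizing p with
  | nil => rfl
  | cons s' l ih =>
      show endPt ((p + s'.disp)) (l ++ [st]) = endPt (p + s'.disp) l + st.disp
      exact ih _

lemma heightsNonneg_append_singleton (r : ℤ) (l : List RStep) (st : RStep) :
    heightsNonneg r (l ++ [st]) ↔
      heightsNonneg r l ∧ 0 ≤ (endPt (0, r) l).2 + st.disp.2 := by
  induction l generalizing r with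
  | nil => simp [heightsNonneg, endPt]
  | cons s' l ih =>
      show (0 ≤ r + s'.disp.2 ∧ heightsNonneg (r + s'.disp.2) (l ++ [st])) ↔ _
      rw [ih]
      have : (endPt ((0 : ℤ), r) (s' :: l)).2 = (endPt ((0 : ℤ), r + s'.disp.2) l).2 := by
        show (endPt (((0 : ℤ), r) + s'.disp) l).2 = _
        rw [show ((0 : ℤ), r) + s'.disp = ((0 : ℤ), r + s'.disp.2) + (s'.disp.1, 0) from by
          ext <;> simp, endPt_translate]
        simp
      rw [this]
      constructor
      · rintro ⟨h1, h2, h3⟩; exact ⟨⟨h1, h2⟩, h3⟩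
      · rintro ⟨⟨h1, h2⟩, h3⟩; exact ⟨h1, h2, h3⟩

lemma append_mem_GammaZ {st : RStep} {l : List RStep} {n r s : ℤ} (hr : 0 ≤ r) (hs : 0 ≤ s) :
    (l ++ [st]) ∈ GammaZ n r s ↔ l ∈ GammaZ (n - st.disp.1) r (s - st.disp.2) := by
  unfold GammaZ
  simp only [Set.mem_setOf_eq, heightsNonneg_append_singleton, endPt_append_singleton]
  constructor
  · rintro ⟨⟨h1, h2⟩, h3⟩
    refine ⟨h1, ?_⟩
    have hf := congrArg Prod.fst h3
    have hs2 := congrArg Prod.snd h3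
    simp at hf hs2
    ext <;> simp <;> omega
  · rintro ⟨h1, h2⟩
    have h2f := congrArg Prod.fst h2
    have h2s := congrArg Prod.snd h2
    simp at h2f h2s
    refine ⟨⟨h1, ?_⟩, ?_⟩
    · rw [h2s]; omega
    · ext <;> simp <;> omega

lemma not_mem_GammaZ_of_neg {n r s : ℤ} (hr : 0 ≤ r) (hs : s < 0) (l : List RStep) :
    l ∉ GammaZ n r s := by
  rintro ⟨h1, h2⟩
  have := endPt_snd_nonneg hr 0 h1
  rw [h2] at this
  omega

lemma Gamma_empty {n r s : ℕ} (h : (n : ℤ) + r < s) (l : List RStep) : l ∉ Gamma n r s := by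
  rintro ⟨h1, h2⟩
  have := endPt_sub_mono ((0 : ℤ), (r : ℤ)) l
  rw [h2] at this
  simp at this
  omega

end RIIAux
namespace RIIAux

instance : Fintype RStep :=
  ⟨⟨[RStep.U, RStep.H, RStep.D, RStep.V, RStep.B], by decide⟩, fun x => by cases x <;> decide⟩

lemma sum_RStep {M : Type*} [AddCommMonoid M] (F : RStep → M) :
    ∑ st : RStep, F st = F .U + F .H + F .D + F .V + F .B := by
  show Multiset.sum _ = _
  simp [Finset.univ, Fintype.elems]
  abel

noncomputable def mu (a b lam c : ℕ → ℂ) (n r s : ℕ) : ℂ :=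
  ∑' p : Gamma n r s, pathWt a b lam c (r : ℤ) p.1

lemma ne_nil_of_mem_Gamma {n r s : ℕ} (hn : n ≠ 0) {l : List RStep}
    (hl : l ∈ Gamma n r s) : l ≠ [] := by
  rintro rfl
  have := congrArg Prod.fst hl.2
  simp [endPt] at this
  omega

/-- head of a path in a nonempty `Gamma`. -/
noncomputable def hd {n r s : ℕ} (hn : n ≠ 0) (y : Gamma n r s) : RStep :=
  y.1.head (ne_nil_of_mem_Gamma hn y.2)

/-- last step of a path in a nonempty `Gamma`. -/
noncomputable def lst {n r s : ℕ} (hn : n ≠ 0) (y : Gamma n r s) : RStep :=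
  y.1.getLast (ne_nil_of_mem_Gamma hn y.2)

variable (a b lam c : ℕ → ℂ)

set_option maxHeartbeats 1000000 in
lemma mu_eq_sum_fibers {n r s : ℕ}
    (hsum : Summable fun p : Gamma n r s => pathWt a b lam c (r : ℤ) p.1)
    (g : Gamma n r s → RStep) :
    mu a b lam c n r s = ∑ st : RStep,
      ∑' y : {y : Gamma n r s // g y = st}, pathWt a b lam c (r : ℤ) y.1.1 := by
  classical
  have h2 : Summable ((fun p : Gamma n r s => pathWt a b lam c (r : ℤ) p.1) ∘
      (Equiv.sigmaFiberEquiv g)) :=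
    hsum.comp_injective (Equiv.injective _)
  have h2' : Summable (fun x : Σ st : RStep, {y : Gamma n r s // g y = st} =>
      pathWt a b lam c (r : ℤ) (((Equiv.sigmaFiberEquiv g) x) : List RStep)) := h2
  rw [mu, ← (Equiv.sigmaFiberEquiv g).tsum_eq, Summable.tsum_sigma h2']
  simp only [Equiv.sigmaFiberEquiv, Equiv.coe_fn_mk, Function.comp]
  exact tsum_fintype fun st => ∑' y : {y : Gamma n r s // g y = st}, pathWt a b lam c (r : ℤ) y.1.1

lemma tsum_fiber_empty {n r s : ℕ} (g : Gamma n r s → RStep) (st : RStep)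
    (h : ∀ y : Gamma n r s, g y ≠ st) :
    ∑' y : {y : Gamma n r s // g y = st}, pathWt a b lam c (r : ℤ) y.1.1 = 0 := by
  have : IsEmpty {y : Gamma n r s // g y = st} := ⟨fun x => h x.1 x.2⟩
  exact tsum_empty

def consFiberEquiv {n r s : ℕ} (hn : n ≠ 0) (st : RStep) (n' r' s' : ℕ)
    (hiff : ∀ l, (st :: l ∈ Gamma n r s) ↔ l ∈ Gamma n' r' s') :
    {y : Gamma n r s // hd hn y = st} ≃ Gamma n' r' s' where
  toFun y := ⟨y.1.1.tail, by
    obtain ⟨⟨l, hl⟩, hy⟩ := y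
    have hc : st :: l.tail = l := by
      rw [← hy]; exact List.cons_head_tail _
    exact (hiff _).mp (by rw [hc]; exact hl)⟩
  invFun l := ⟨⟨st :: l.1, (hiff l.1).mpr l.2⟩, rfl⟩
  left_inv y := by
    obtain ⟨⟨l, hl⟩, hy⟩ := y
    apply Subtype.ext; apply Subtype.ext
    show st :: l.tail = l
    rw [← hy]; exact List.cons_head_tail _
  right_inv l := by apply Subtype.ext; rfl

lemma consFiberEquiv_symm_apply {n r s : ℕ} (hn : n ≠ 0) (st : RStep) (n' r' s' : ℕ)
    (hiff : ∀ l, (st :: l ∈ Gamma n r s) ↔ l ∈ Gamma n' r' s') (z : Gamma n' r' s') :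
    (((consFiberEquiv hn st n' r' s' hiff).symm z).1 : List RStep) = st :: z.1 := rfl

lemma tsum_fiber_cons {n r s : ℕ} (hn : n ≠ 0) (st : RStep) (n' r' s' : ℕ)
    (hiff : ∀ l, (st :: l ∈ Gamma n r s) ↔ l ∈ Gamma n' r' s')
    (hr' : (r' : ℤ) = (r : ℤ) + st.disp.2) :
    ∑' y : {y : Gamma n r s // hd hn y = st}, pathWt a b lam c (r : ℤ) y.1.1
      = stepWt a b lam c (r : ℤ) st * mu a b lam c n' r' s' := by
  rw [← (consFiberEquiv hn st n' r' s' hiff).symm.tsum_eq]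
  have hterm : ∀ z : Gamma n' r' s',
      pathWt a b lam c (r : ℤ) (((consFiberEquiv hn st n' r' s' hiff).symm z).1 : List RStep)
        = stepWt a b lam c (r : ℤ) st * pathWt a b lam c ((r' : ℕ) : ℤ) z.1 := by
    intro z
    rw [consFiberEquiv_symm_apply, hr']
    rfl
  rw [tsum_congr hterm, tsum_mul_left, mu]

end RIIAux
namespace RIIAux

lemma endPt_snd_cons (h : ℤ) (s' : RStep) (l : List RStep) :
    (endPt ((0 : ℤ), h) (s' :: l)).2 = (endPt ((0 : ℤ), h + s'.disp.2) l).2 := by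
  show (endPt (((0 : ℤ), h) + s'.disp) l).2 = _
  rw [show ((0 : ℤ), h) + s'.disp = ((0 : ℤ), h + s'.disp.2) + (s'.disp.1, 0) from by
    ext <;> simp, endPt_translate]
  simp

variable (a b lam c : ℕ → ℂ)

lemma pathWt_append_singleton (h : ℤ) (l : List RStep) (st : RStep) :
    pathWt a b lam c h (l ++ [st])
      = pathWt a b lam c h l * stepWt a b lam c (endPt (0, h) l).2 st := by
  induction l generalizing h with
  | nil =>
      show stepWt a b lam c h st * 1 = 1 * stepWt a b lam c (endPt ((0:ℤ), h) []).2 st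
      show stepWt a b lam c h st * 1 = 1 * stepWt a b lam c h st
      ring
  | cons s' l ih =>
      show stepWt a b lam c h s' * pathWt a b lam c (h + s'.disp.2) (l ++ [st]) = _
      rw [ih, endPt_snd_cons]
      show _ = stepWt a b lam c h s' * pathWt a b lam c (h + s'.disp.2) l *
        stepWt a b lam c (endPt ((0:ℤ), h + s'.disp.2) l).2 st
      ring

def lastFiberEquiv {n r s : ℕ} (hn : n ≠ 0) (st : RStep) (n' s' : ℕ)
    (hiff : ∀ l, (l ++ [st] ∈ Gamma n r s) ↔ l ∈ Gamma n' r s') :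
    {y : Gamma n r s // lst hn y = st} ≃ Gamma n' r s' where
  toFun y := ⟨y.1.1.dropLast, by
    obtain ⟨⟨l, hl⟩, hy⟩ := y
    have hc : l.dropLast ++ [st] = l := by
      rw [← hy]; exact List.dropLast_append_getLast _
    exact (hiff _).mp (by rw [hc]; exact hl)⟩
  invFun l := ⟨⟨l.1 ++ [st], (hiff l.1).mpr l.2⟩, by
    show (l.1 ++ [st]).getLast _ = st
    simp⟩
  left_inv y := by
    obtain ⟨⟨l, hl⟩, hy⟩ := y
    apply Subtype.ext; apply Subtype.ext
    show l.dropLast ++ [st] = l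
    rw [← hy]; exact List.dropLast_append_getLast _
  right_inv l := by
    apply Subtype.ext
    show (l.1 ++ [st]).dropLast = l.1
    simp

lemma lastFiberEquiv_symm_apply {n r s : ℕ} (hn : n ≠ 0) (st : RStep) (n' s' : ℕ)
    (hiff : ∀ l, (l ++ [st] ∈ Gamma n r s) ↔ l ∈ Gamma n' r s') (z : Gamma n' r s') :
    (((lastFiberEquiv hn st n' s' hiff).symm z).1 : List RStep) = z.1 ++ [st] := rfl

lemma tsum_fiber_last {n r s : ℕ} (hn : n ≠ 0) (st : RStep) (n' s' : ℕ)
    (hiff : ∀ l, (l ++ [st] ∈ Gamma n r s) ↔ l ∈ Gamma n' r s') :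
    ∑' y : {y : Gamma n r s // lst hn y = st}, pathWt a b lam c (r : ℤ) y.1.1
      = mu a b lam c n' r s' * stepWt a b lam c (s' : ℤ) st := by
  rw [← (lastFiberEquiv hn st n' s' hiff).symm.tsum_eq]
  have hterm : ∀ z : Gamma n' r s',
      pathWt a b lam c (r : ℤ) (((lastFiberEquiv hn st n' s' hiff).symm z).1 : List RStep)
        = pathWt a b lam c (r : ℤ) z.1 * stepWt a b lam c (s' : ℤ) st := by
    intro z
    rw [lastFiberEquiv_symm_apply, pathWt_append_singleton]
    have h2 : (endPt ((0 : ℤ), (r : ℤ)) z.1).2 = (s' : ℤ) := by rw [z.2.2]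
    rw [h2]
  rw [tsum_congr hterm, tsum_mul_right, mu]

lemma cons_iff (st : RStep) (n r s n' r' : ℕ)
    (h1 : (n' : ℤ) = (n : ℤ) - st.disp.1) (h2 : (r' : ℤ) = (r : ℤ) + st.disp.2) :
    ∀ l, (st :: l ∈ Gamma n r s) ↔ l ∈ Gamma n' r' s := by
  intro l
  rw [Gamma_eq_GammaZ, Gamma_eq_GammaZ, cons_mem_GammaZ, ← h1, ← h2]
  simp

lemma append_iff (st : RStep) (n r s n' s' : ℕ)
    (h1 : (n' : ℤ) = (n : ℤ) - st.disp.1) (h3 : (s' : ℤ) = (s : ℤ) - st.disp.2) :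
    ∀ l, (l ++ [st] ∈ Gamma n r s) ↔ l ∈ Gamma n' r s' := by
  intro l
  rw [Gamma_eq_GammaZ, Gamma_eq_GammaZ,
    append_mem_GammaZ (Int.natCast_nonneg r) (Int.natCast_nonneg s), ← h1, ← h3]

lemma hd_ne_of_down {n s : ℕ} (hn : n ≠ 0) (st : RStep) (hst : st.disp.2 < 0)
    (y : Gamma n 0 s) : hd hn y ≠ st := by
  obtain ⟨l, hl⟩ := y
  intro h
  have hc : st :: l.tail = l := by
    rw [← h]; exact List.cons_head_tail _
  have h1 := hl.1
  rw [← hc] at h1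
  have h2 := h1.1
  simp at h2
  omega

lemma lst_ne_up {n r : ℕ} (hn : n ≠ 0) (y : Gamma n r 0) : lst hn y ≠ .U := by
  obtain ⟨l, hl⟩ := y
  intro h
  have hc : l.dropLast ++ [RStep.U] = l := by
    rw [← h]; exact List.dropLast_append_getLast _
  have h1 : l.dropLast ++ [RStep.U] ∈ GammaZ ((n : ℕ) : ℤ) ((r : ℕ) : ℤ) (((0 : ℕ)) : ℤ) := by
    rw [hc]; exact hl
  have h3 := (append_mem_GammaZ (Int.natCast_nonneg r) (by norm_num)).mp h1
  exact not_mem_GammaZ_of_neg (Int.natCast_nonneg r) (by norm_num [RStep.disp]) _ h3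

lemma mu_empty {n r s : ℕ} (h : (n : ℤ) + r < s) : mu a b lam c n r s = 0 := by
  have : IsEmpty (Gamma n r s) := ⟨fun y => Gamma_empty h y.1 y.2⟩
  exact tsum_empty

end RIIAux
namespace RIIAux

variable (a b lam c : ℕ → ℂ)

lemma stepWt_natCast_H (k : ℕ) : stepWt a b lam c (k : ℤ) .H = b k := by
  simp [stepWt]
lemma stepWt_natCast_D (k : ℕ) : stepWt a b lam c (k : ℤ) .D = lam k := by
  simp [stepWt]
lemma stepWt_natCast_V (k : ℕ) : stepWt a b lam c (k : ℤ) .V = a k := by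
  simp [stepWt]
lemma stepWt_natCast_B (k : ℕ) : stepWt a b lam c (k : ℤ) .B = c k := by
  simp [stepWt]
lemma stepWt_U (h : ℤ) : stepWt a b lam c h .U = 1 := rfl

variable (hsum : ∀ n r s : ℕ, Summable fun p : Gamma n r s => pathWt a b lam c (r : ℤ) p.1)
include hsum

lemma L1b (n r s : ℕ) :
    mu a b lam c (n+1) (r+1) s
      = mu a b lam c n (r+2) s + b (r+1) * mu a b lam c n (r+1) s
        + lam (r+1) * mu a b lam c n r s + a (r+1) * mu a b lam c (n+1) r s
        + c (r+1) * mu a b lam c (n+2) r s := by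
  have hn : (n+1) ≠ 0 := Nat.succ_ne_zero n
  rw [mu_eq_sum_fibers a b lam c (hsum _ _ _) (hd hn), sum_RStep,
    tsum_fiber_cons a b lam c hn .U n (r+2) s
      (cons_iff _ _ _ _ _ _ (by simp only [RStep.disp]; omega) (by simp only [RStep.disp]; omega))
      (by simp only [RStep.disp]; omega),
    tsum_fiber_cons a b lam c hn .H n (r+1) s
      (cons_iff _ _ _ _ _ _ (by simp only [RStep.disp]; omega) (by simp only [RStep.disp]; omega))
      (by simp only [RStep.disp]; omega),
    tsum_fiber_cons a b lam c hn .D n r s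
      (cons_iff _ _ _ _ _ _ (by simp only [RStep.disp]; omega) (by simp only [RStep.disp]; omega))
      (by simp only [RStep.disp]; omega),
    tsum_fiber_cons a b lam c hn .V (n+1) r s
      (cons_iff _ _ _ _ _ _ (by simp only [RStep.disp]; omega) (by simp only [RStep.disp]; omega))
      (by simp only [RStep.disp]; omega),
    tsum_fiber_cons a b lam c hn .B (n+2) r s
      (cons_iff _ _ _ _ _ _ (by simp only [RStep.disp]; omega)
        (by simp only [RStep.disp]; omega))
      (by simp only [RStep.disp]; omega),
    stepWt_natCast_H, stepWt_natCast_D, stepWt_natCast_V, stepWt_natCast_B, stepWt_U]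
  ring

lemma L1a (n s : ℕ) :
    mu a b lam c (n+1) 0 s = mu a b lam c n 1 s + b 0 * mu a b lam c n 0 s := by
  have hn : (n+1) ≠ 0 := Nat.succ_ne_zero n
  rw [mu_eq_sum_fibers a b lam c (hsum _ _ _) (hd hn), sum_RStep,
    tsum_fiber_cons a b lam c hn .U n 1 s
      (cons_iff _ _ _ _ _ _ (by simp only [RStep.disp]; omega) (by simp only [RStep.disp]; omega))
      (by simp only [RStep.disp]; omega),
    tsum_fiber_cons a b lam c hn .H n 0 s
      (cons_iff _ _ _ _ _ _ (by simp only [RStep.disp]; omega) (by simp only [RStep.disp]; omega))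
      (by simp only [RStep.disp]; omega),
    tsum_fiber_empty a b lam c (hd hn) .D
      (fun y => hd_ne_of_down hn .D (by simp only [RStep.disp]; omega) y),
    tsum_fiber_empty a b lam c (hd hn) .V
      (fun y => hd_ne_of_down hn .V (by simp only [RStep.disp]; omega) y),
    tsum_fiber_empty a b lam c (hd hn) .B
      (fun y => hd_ne_of_down hn .B (by simp only [RStep.disp]; omega) y),
    stepWt_natCast_H, stepWt_U]
  push_cast
  ring

lemma L2b (n r s : ℕ) :
    mu a b lam c (n+1) r (s+1)
      = mu a b lam c n r s + b (s+1) * mu a b lam c n r (s+1)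
        + lam (s+2) * mu a b lam c n r (s+2) + a (s+2) * mu a b lam c (n+1) r (s+2)
        + c (s+2) * mu a b lam c (n+2) r (s+2) := by
  have hn : (n+1) ≠ 0 := Nat.succ_ne_zero n
  rw [mu_eq_sum_fibers a b lam c (hsum _ _ _) (lst hn), sum_RStep,
    tsum_fiber_last a b lam c hn .U n s
      (append_iff _ _ _ _ _ _ (by simp only [RStep.disp]; omega) (by simp only [RStep.disp]; omega)),
    tsum_fiber_last a b lam c hn .H n (s+1)
      (append_iff _ _ _ _ _ _ (by simp only [RStep.disp]; omega) (by simp only [RStep.disp]; omega)),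
    tsum_fiber_last a b lam c hn .D n (s+2)
      (append_iff _ _ _ _ _ _ (by simp only [RStep.disp]; omega) (by simp only [RStep.disp]; omega)),
    tsum_fiber_last a b lam c hn .V (n+1) (s+2)
      (append_iff _ _ _ _ _ _ (by simp only [RStep.disp]; omega)
        (by simp only [RStep.disp]; omega)),
    tsum_fiber_last a b lam c hn .B (n+2) (s+2)
      (append_iff _ _ _ _ _ _ (by simp only [RStep.disp]; omega)
        (by simp only [RStep.disp]; omega)),
    stepWt_natCast_H, stepWt_natCast_D, stepWt_natCast_V, stepWt_natCast_B, stepWt_U]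
  ring

lemma L2a (n r : ℕ) :
    mu a b lam c (n+1) r 0
      = b 0 * mu a b lam c n r 0 + lam 1 * mu a b lam c n r 1
        + a 1 * mu a b lam c (n+1) r 1 + c 1 * mu a b lam c (n+2) r 1 := by
  have hn : (n+1) ≠ 0 := Nat.succ_ne_zero n
  rw [mu_eq_sum_fibers a b lam c (hsum _ _ _) (lst hn), sum_RStep,
    tsum_fiber_empty a b lam c (lst hn) .U (fun y => lst_ne_up hn y),
    tsum_fiber_last a b lam c hn .H n 0
      (append_iff _ _ _ _ _ _ (by simp only [RStep.disp]; omega) (by simp only [RStep.disp]; omega)),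
    tsum_fiber_last a b lam c hn .D n 1
      (append_iff _ _ _ _ _ _ (by simp only [RStep.disp]; omega) (by simp only [RStep.disp]; omega)),
    tsum_fiber_last a b lam c hn .V (n+1) 1
      (append_iff _ _ _ _ _ _ (by simp only [RStep.disp]; omega) (by simp only [RStep.disp]; omega)),
    tsum_fiber_last a b lam c hn .B (n+2) 1
      (append_iff _ _ _ _ _ _ (by simp only [RStep.disp]; omega) (by simp only [RStep.disp]; omega)),
    stepWt_natCast_H, stepWt_natCast_D, stepWt_natCast_V, stepWt_natCast_B]
  ring

end RIIAux
namespace RIIAux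

noncomputable abbrev π : Polynomial ℂ →+* RatFunc ℂ := algebraMap (Polynomial ℂ) (RatFunc ℂ)

variable (a b lam c : ℕ → ℂ)

/-- the quadratic factor -/
noncomputable def vq (m : ℕ) : Polynomial ℂ :=
  Polynomial.C (c m) * Polynomial.X ^ 2 + Polynomial.C (a m) * Polynomial.X
    + Polynomial.C (lam m)

lemma dpoly_succ (m : ℕ) :
    dpoly a lam c (m + 1) = dpoly a lam c m * vq a lam c (m + 1) :=
  Finset.prod_range_succ _ _

lemma dpoly_zero : dpoly a lam c 0 = 1 := Finset.prod_range_zero _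

lemma vq_ne_zero {m : ℕ} (hc : c m ≠ 0) : vq a lam c m ≠ 0 := fun h => hc (by
  have := congrArg (fun p => Polynomial.coeff p 2) h
  simpa [vq, Polynomial.coeff_C] using this)

lemma dpoly_ne_zero (hR : RIIConds a b lam c) (m : ℕ) : dpoly a lam c m ≠ 0 := by
  induction m with
  | zero => simp [dpoly_zero]
  | succ k ih =>
      rw [dpoly_succ]
      exact mul_ne_zero ih (vq_ne_zero a lam c (hR (k+1) (Nat.le_add_left 1 k)).1)

lemma pi_dpoly_ne_zero (hR : RIIConds a b lam c) (m : ℕ) :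
    π (dpoly a lam c m) ≠ 0 := by
  rw [map_ne_zero_iff _ (RatFunc.algebraMap_injective ℂ)]
  exact dpoly_ne_zero a b lam c hR m

lemma Qfun_zero : Qfun a b lam c 0 = 1 := by
  simp [Qfun, Ppoly, dpoly_zero]

lemma Ppoly_two (m : ℕ) :
    Ppoly a b lam c (m + 2)
      = (Polynomial.X - Polynomial.C (b (m+1))) * Ppoly a b lam c (m+1)
        - vq a lam c (m+1) * Ppoly a b lam c m := by
  rw [Ppoly, vq]

lemma Ppoly_one : Ppoly a b lam c 1 = Polynomial.X - Polynomial.C (b 0) := rfl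

lemma aMapC (z : ℂ) : algebraMap ℂ (RatFunc ℂ) z = π (Polynomial.C z) := by
  rw [IsScalarTower.algebraMap_apply ℂ (Polynomial ℂ) (RatFunc ℂ)]
  rfl

lemma pi_vq (m : ℕ) : π (vq a lam c m)
    = RatFunc.C (c m) * RatFunc.X ^ 2 + RatFunc.C (a m) * RatFunc.X + RatFunc.C (lam m) := by
  simp [vq, map_add, map_mul, map_pow, RatFunc.algebraMap_C, RatFunc.algebraMap_X]

/-- three-term recurrence for the Q's, positive index case -/
lemma Qrec_succ (hR : RIIConds a b lam c) (k : ℕ) :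
    RatFunc.X * Qfun a b lam c (k+1)
      = Qfun a b lam c k
        + algebraMap ℂ (RatFunc ℂ) (b (k+1)) * Qfun a b lam c (k+1)
        + algebraMap ℂ (RatFunc ℂ) (c (k+2)) * (RatFunc.X ^ 2 * Qfun a b lam c (k+2))
        + algebraMap ℂ (RatFunc ℂ) (a (k+2)) * (RatFunc.X * Qfun a b lam c (k+2))
        + algebraMap ℂ (RatFunc ℂ) (lam (k+2)) * Qfun a b lam c (k+2) := by
  have hd0 := pi_dpoly_ne_zero a b lam c hR k
  have hd2 := pi_dpoly_ne_zero a b lam c hR (k+2)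
  have hv1 : π (vq a lam c (k+1)) ≠ 0 := by
    rw [map_ne_zero_iff _ (RatFunc.algebraMap_injective ℂ)]
    exact vq_ne_zero a lam c (hR (k+1) (Nat.le_add_left 1 k)).1
  have hv2 : π (vq a lam c (k+2)) ≠ 0 := by
    rw [map_ne_zero_iff _ (RatFunc.algebraMap_injective ℂ)]
    exact vq_ne_zero a lam c (hR (k+2) (Nat.le_add_left 1 (k+1))).1
  have hds1 : dpoly a lam c (k+2) = dpoly a lam c (k+1) * vq a lam c (k+2) :=
    dpoly_succ a lam c (k+1)
  have hds0 : dpoly a lam c (k+1) = dpoly a lam c k * vq a lam c (k+1) :=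
    dpoly_succ a lam c k
  have hrec := congrArg π (Ppoly_two a b lam c k)
  simp only [map_sub, map_mul, RatFunc.algebraMap_C, RatFunc.algebraMap_X] at hrec
  have e0 : Qfun a b lam c k
      = π (Ppoly a b lam c k) * π (vq a lam c (k+1)) * π (vq a lam c (k+2))
        / π (dpoly a lam c (k+2)) := by
    rw [Qfun, hds1, hds0, map_mul, map_mul, mul_div_mul_right _ _ hv2,
      mul_div_mul_right _ _ hv1]
  have e1 : Qfun a b lam c (k+1)
      = π (Ppoly a b lam c (k+1)) * π (vq a lam c (k+2)) / π (dpoly a lam c (k+2)) := by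
    rw [Qfun, hds1, map_mul, mul_div_mul_right _ _ hv2]
  have e2 : Qfun a b lam c (k+2)
      = π (Ppoly a b lam c (k+2)) / π (dpoly a lam c (k+2)) := rfl
  rw [e0, e1, e2]
  simp only [aMapC, RatFunc.algebraMap_C, ← mul_div_assoc, ← add_div]
  rw [div_eq_div_iff hd2 hd2]
  linear_combination (-(π (vq a lam c (k+2)) * π (dpoly a lam c (k+2)))) * hrec
    + (π (Ppoly a b lam c (k+2)) * π (dpoly a lam c (k+2))) * (pi_vq a lam c (k+2))

end RIIAux
namespace RIIAux

variable (a b lam c : ℕ → ℂ)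

lemma pi_P0 : π (Ppoly a b lam c 0) = 1 := by
  show π 1 = 1
  exact map_one π

lemma Qrec_zero (hR : RIIConds a b lam c) :
    RatFunc.X * Qfun a b lam c 0
      = algebraMap ℂ (RatFunc ℂ) (b 0) * Qfun a b lam c 0
        + algebraMap ℂ (RatFunc ℂ) (c 1) * (RatFunc.X ^ 2 * Qfun a b lam c 1)
        + algebraMap ℂ (RatFunc ℂ) (a 1) * (RatFunc.X * Qfun a b lam c 1)
        + algebraMap ℂ (RatFunc ℂ) (lam 1) * Qfun a b lam c 1 := by
  have hv1 : π (vq a lam c 1) ≠ 0 := by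
    rw [map_ne_zero_iff _ (RatFunc.algebraMap_injective ℂ)]
    exact vq_ne_zero a lam c (hR 1 le_rfl).1
  have hd1e : π (dpoly a lam c 1) = π (vq a lam c 1) := by
    rw [dpoly_succ a lam c 0, dpoly_zero, one_mul]
  rw [Qfun_zero, mul_one, mul_one, Qfun, Ppoly_one, hd1e]
  simp only [aMapC, RatFunc.algebraMap_C, map_sub, RatFunc.algebraMap_X]
  field_simp
  linear_combination (RatFunc.X - RatFunc.C (b 0)) * pi_vq a lam c 1

lemma aMap_ne_zero {z : ℂ} (hz : z ≠ 0) : algebraMap ℂ (RatFunc ℂ) z ≠ 0 := by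
  simpa using hz

lemma aMap_inv_mul {z : ℂ} (hz : z ≠ 0) :
    algebraMap ℂ (RatFunc ℂ) z⁻¹ * algebraMap ℂ (RatFunc ℂ) z = 1 := by
  rw [← map_mul, inv_mul_cancel₀ hz, map_one]

lemma Qsolve_succ (hR : RIIConds a b lam c) (j k : ℕ) :
    RatFunc.X ^ (j+2) * Qfun a b lam c (k+2)
      = algebraMap ℂ (RatFunc ℂ) (c (k+2))⁻¹ * (RatFunc.X ^ (j+1) * Qfun a b lam c (k+1))
        - algebraMap ℂ (RatFunc ℂ) (c (k+2))⁻¹ * (RatFunc.X ^ j * Qfun a b lam c k)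
        - algebraMap ℂ (RatFunc ℂ) ((c (k+2))⁻¹ * b (k+1)) * (RatFunc.X ^ j * Qfun a b lam c (k+1))
        - algebraMap ℂ (RatFunc ℂ) ((c (k+2))⁻¹ * a (k+2)) * (RatFunc.X ^ (j+1) * Qfun a b lam c (k+2))
        - algebraMap ℂ (RatFunc ℂ) ((c (k+2))⁻¹ * lam (k+2)) * (RatFunc.X ^ j * Qfun a b lam c (k+2)) := by
  have hc : c (k+2) ≠ 0 := (hR (k+2) (Nat.le_add_left 1 (k+1))).1
  have hinv := aMap_inv_mul (z := c (k+2)) hc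
  have h := congrArg (fun z => RatFunc.X ^ j * z) (Qrec_succ a b lam c hR k)
  simp only [map_mul]
  linear_combination (-(algebraMap ℂ (RatFunc ℂ) (c (k+2))⁻¹)) * h
    - (RatFunc.X ^ (j+2) * Qfun a b lam c (k+2)) * hinv

lemma Qsolve_zero (hR : RIIConds a b lam c) (j : ℕ) :
    RatFunc.X ^ (j+2) * Qfun a b lam c 1
      = algebraMap ℂ (RatFunc ℂ) (c 1)⁻¹ * (RatFunc.X ^ (j+1) * Qfun a b lam c 0)
        - algebraMap ℂ (RatFunc ℂ) ((c 1)⁻¹ * b 0) * (RatFunc.X ^ j * Qfun a b lam c 0)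
        - algebraMap ℂ (RatFunc ℂ) ((c 1)⁻¹ * a 1) * (RatFunc.X ^ (j+1) * Qfun a b lam c 1)
        - algebraMap ℂ (RatFunc ℂ) ((c 1)⁻¹ * lam 1) * (RatFunc.X ^ j * Qfun a b lam c 1) := by
  have hc : c 1 ≠ 0 := (hR 1 le_rfl).1
  have hinv := aMap_inv_mul (z := c 1) hc
  have h := congrArg (fun z => RatFunc.X ^ j * z) (Qrec_zero a b lam c hR)
  simp only [map_mul]
  linear_combination (-(algebraMap ℂ (RatFunc ℂ) (c 1)⁻¹)) * h
    - (RatFunc.X ^ (j+2) * Qfun a b lam c 1) * hinv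

lemma Pdecomp1 (n : ℕ) (f : RatFunc ℂ) :
    RatFunc.X ^ n * π (Ppoly a b lam c 1) * f
      = RatFunc.X ^ (n+1) * f - algebraMap ℂ (RatFunc ℂ) (b 0) * (RatFunc.X ^ n * f) := by
  rw [Ppoly_one]
  simp only [map_sub, RatFunc.algebraMap_C, RatFunc.algebraMap_X, aMapC]
  ring

lemma Pdecomp2 (n m : ℕ) (f : RatFunc ℂ) :
    RatFunc.X ^ n * π (Ppoly a b lam c (m+2)) * f
      = RatFunc.X ^ (n+1) * π (Ppoly a b lam c (m+1)) * f
        - algebraMap ℂ (RatFunc ℂ) (b (m+1)) * (RatFunc.X ^ n * π (Ppoly a b lam c (m+1)) * f)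
        - algebraMap ℂ (RatFunc ℂ) (c (m+1)) * (RatFunc.X ^ (n+2) * π (Ppoly a b lam c m) * f)
        - algebraMap ℂ (RatFunc ℂ) (a (m+1)) * (RatFunc.X ^ (n+1) * π (Ppoly a b lam c m) * f)
        - algebraMap ℂ (RatFunc ℂ) (lam (m+1)) * (RatFunc.X ^ n * π (Ppoly a b lam c m) * f) := by
  have hrec := congrArg π (Ppoly_two a b lam c m)
  simp only [map_sub, map_mul, RatFunc.algebraMap_C, RatFunc.algebraMap_X] at hrec
  rw [pi_vq] at hrec
  simp only [aMapC, RatFunc.algebraMap_C]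
  linear_combination (RatFunc.X ^ n * f) * hrec

lemma X_pow_mul_Q_mem (n m : ℕ) : RatFunc.X ^ n * Qfun a b lam c m ∈ Wspace a b lam c :=
  Submodule.subset_span ⟨n, m, rfl⟩

lemma poly_mul_Q_mem (q : Polynomial ℂ) (m : ℕ) :
    π q * Qfun a b lam c m ∈ Wspace a b lam c := by
  induction q using Polynomial.induction_on' with
  | add p q hp hq => rw [map_add, add_mul]; exact (Wspace a b lam c).add_mem hp hq
  | monomial i z =>
      have hm : π (Polynomial.monomial i z) * Qfun a b lam c m
          = z • (RatFunc.X ^ i * Qfun a b lam c m) := by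
        rw [← Polynomial.C_mul_X_pow_eq_monomial]
        simp only [map_mul, map_pow, RatFunc.algebraMap_C, RatFunc.algebraMap_X]
        rw [Algebra.smul_def, aMapC, RatFunc.algebraMap_C]
        ring
      rw [hm]
      exact Submodule.smul_mem _ _ (X_pow_mul_Q_mem a b lam c i m)

lemma XPQ_mem (n r m : ℕ) :
    RatFunc.X ^ n * π (Ppoly a b lam c r) * Qfun a b lam c m ∈ Wspace a b lam c := by
  have h : RatFunc.X ^ n * π (Ppoly a b lam c r)
      = π (Polynomial.X ^ n * Ppoly a b lam c r) := by
    rw [map_mul, map_pow, RatFunc.algebraMap_X]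
  rw [h]
  exact poly_mul_Q_mem a b lam c _ m

lemma Lcomb5 (ℒ : Wspace a b lam c →ₗ[ℂ] ℂ) (f : Wspace a b lam c)
    (z1 z2 z3 z4 z5 : ℂ) (g1 g2 g3 g4 g5 : RatFunc ℂ)
    (hg1 : g1 ∈ Wspace a b lam c) (hg2 : g2 ∈ Wspace a b lam c)
    (hg3 : g3 ∈ Wspace a b lam c) (hg4 : g4 ∈ Wspace a b lam c)
    (hg5 : g5 ∈ Wspace a b lam c)
    (hf : (f : RatFunc ℂ)
      = algebraMap ℂ (RatFunc ℂ) z1 * g1 + algebraMap ℂ (RatFunc ℂ) z2 * g2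
        + algebraMap ℂ (RatFunc ℂ) z3 * g3 + algebraMap ℂ (RatFunc ℂ) z4 * g4
        + algebraMap ℂ (RatFunc ℂ) z5 * g5) :
    ℒ f = z1 * ℒ ⟨g1, hg1⟩ + z2 * ℒ ⟨g2, hg2⟩ + z3 * ℒ ⟨g3, hg3⟩
      + z4 * ℒ ⟨g4, hg4⟩ + z5 * ℒ ⟨g5, hg5⟩ := by
  have hfe : f = z1 • (⟨g1, hg1⟩ : Wspace a b lam c) + z2 • ⟨g2, hg2⟩ + z3 • ⟨g3, hg3⟩
      + z4 • ⟨g4, hg4⟩ + z5 • ⟨g5, hg5⟩ := by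
    apply Subtype.ext
    simp only [Submodule.coe_add, SetLike.val_smul, Algebra.smul_def]
    exact hf
  rw [hfe]
  simp only [map_add, map_smul, smul_eq_mul]

end RIIAux
open RIIAux in
/-- Let the sequences satisfy the type `R_II` conditions and suppose the weight families
over `Γ_{n,r,s}` are summable. If `ℒ : W → ℂ` is ℂ-linear with `ℒ(x^n) = Σ_{p∈Γ_n} wt(p)`,
`ℒ(Q_n) = 0` and `ℒ(x Q_{n+1}) = 0` for `n ≥ 1`, and `ℒ(x Q_1) = Σ_{p∈Γ_{1,1}} wt(p)`,
then `ℒ(x^n P_r Q_s) = Σ_{p∈Γ_{n,r,s}} wt(p)` for all `n, r, s ≥ 0`. -/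
theorem stmt4 (a b lam c : ℕ → ℂ) (hR : RIIConds a b lam c)
    (hsum : ∀ n r s : ℕ, Summable fun p : Gamma n r s => pathWt a b lam c (r : ℤ) p.1)
    (ℒ : Wspace a b lam c →ₗ[ℂ] ℂ)
    (h1 : ∀ (n : ℕ) (f : Wspace a b lam c), (f : RatFunc ℂ) = RatFunc.X ^ n →
      ℒ f = ∑' p : Gamma n 0 0, pathWt a b lam c 0 p.1)
    (h2 : ∀ (n : ℕ), 1 ≤ n → ∀ f : Wspace a b lam c, (f : RatFunc ℂ) = Qfun a b lam c n →
      ℒ f = 0)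
    (h3 : ∀ (n : ℕ), 1 ≤ n → ∀ f : Wspace a b lam c,
      (f : RatFunc ℂ) = RatFunc.X * Qfun a b lam c (n + 1) → ℒ f = 0)
    (h4 : ∀ f : Wspace a b lam c, (f : RatFunc ℂ) = RatFunc.X * Qfun a b lam c 1 →
      ℒ f = ∑' p : Gamma 1 0 1, pathWt a b lam c 0 p.1) :
    ∀ (n r s : ℕ) (f : Wspace a b lam c),
      (f : RatFunc ℂ) = RatFunc.X ^ n *
          algebraMap (Polynomial ℂ) (RatFunc ℂ) (Ppoly a b lam c r) * Qfun a b lam c s →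
      ℒ f = ∑' p : Gamma n r s, pathWt a b lam c (r : ℤ) p.1 := by
  
  classical
  have hmu0 : ∀ n s : ℕ, (∑' p : Gamma n 0 s, pathWt a b lam c 0 p.1)
      = RIIAux.mu a b lam c n 0 s := by
    intro n s; rw [RIIAux.mu]; norm_num
  -- Step I : the case r = 0
  have T0 : ∀ n s : ℕ, ∀ f : Wspace a b lam c,
      (f : RatFunc ℂ) = RatFunc.X ^ n * Qfun a b lam c s →
      ℒ f = RIIAux.mu a b lam c n 0 s := by
    intro n
    induction n using Nat.strong_induction_on with
    | _ n IH =>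
      intro s f hf
      rcases n with _ | n1
      · rcases s with _ | s1
        · rw [h1 0 f (by rw [hf, Qfun_zero a b lam c, mul_one]), hmu0]
        · rw [h2 (s1+1) (by omega) f (by rw [hf, pow_zero, one_mul])]
          exact (mu_empty a b lam c (by push_cast; omega)).symm
      rcases n1 with _ | k
      · rcases s with _ | s1
        · rw [h1 1 f (by rw [hf, Qfun_zero a b lam c, mul_one]), hmu0]
        rcases s1 with _ | s2
        · rw [h4 f (by rw [hf, pow_one]), hmu0]
        · rw [h3 (s2+1) (by omega) f (by rw [hf, pow_one])]
          exact (mu_empty a b lam c (by push_cast; omega)).symm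
      · -- n = k + 2
        rcases s with _ | t
        · rw [h1 (k+2) f (by rw [hf, Qfun_zero a b lam c, mul_one]), hmu0]
        rcases t with _ | u
        · -- s = 1
          have hc1 : c 1 ≠ 0 := (hR 1 le_rfl).1
          have hf' : (f : RatFunc ℂ)
              = algebraMap ℂ (RatFunc ℂ) (c 1)⁻¹
                  * (RatFunc.X ^ (k+1) * Qfun a b lam c 0)
                + algebraMap ℂ (RatFunc ℂ) (-((c 1)⁻¹ * b 0))
                  * (RatFunc.X ^ k * Qfun a b lam c 0)
                + algebraMap ℂ (RatFunc ℂ) (-((c 1)⁻¹ * a 1))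
                  * (RatFunc.X ^ (k+1) * Qfun a b lam c 1)
                + algebraMap ℂ (RatFunc ℂ) (-((c 1)⁻¹ * lam 1))
                  * (RatFunc.X ^ k * Qfun a b lam c 1)
                + algebraMap ℂ (RatFunc ℂ) 0
                  * (RatFunc.X ^ 0 * Qfun a b lam c 0) := by
            rw [hf, Qsolve_zero a b lam c hR k]
            simp only [map_neg, map_zero]
            ring
          rw [Lcomb5 a b lam c ℒ f _ _ _ _ _ _ _ _ _ _
            (X_pow_mul_Q_mem a b lam c (k+1) 0) (X_pow_mul_Q_mem a b lam c k 0)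
            (X_pow_mul_Q_mem a b lam c (k+1) 1) (X_pow_mul_Q_mem a b lam c k 1)
            (X_pow_mul_Q_mem a b lam c 0 0) hf']
          rw [IH (k+1) (by omega) 0 _ rfl, IH k (by omega) 0 _ rfl,
            IH (k+1) (by omega) 1 _ rfl, IH k (by omega) 1 _ rfl]
          have hrec := RIIAux.L2a a b lam c hsum k 0
          show _ = RIIAux.mu a b lam c (k+2) 0 1
          field_simp
          linear_combination hrec
        · -- s = u + 2
          have hcu : c (u+2) ≠ 0 := (hR (u+2) (by omega)).1
          have hf' : (f : RatFunc ℂ)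
              = algebraMap ℂ (RatFunc ℂ) (c (u+2))⁻¹
                  * (RatFunc.X ^ (k+1) * Qfun a b lam c (u+1))
                + algebraMap ℂ (RatFunc ℂ) (-((c (u+2))⁻¹))
                  * (RatFunc.X ^ k * Qfun a b lam c u)
                + algebraMap ℂ (RatFunc ℂ) (-((c (u+2))⁻¹ * b (u+1)))
                  * (RatFunc.X ^ k * Qfun a b lam c (u+1))
                + algebraMap ℂ (RatFunc ℂ) (-((c (u+2))⁻¹ * a (u+2)))
                  * (RatFunc.X ^ (k+1) * Qfun a b lam c (u+2))
                + algebraMap ℂ (RatFunc ℂ) (-((c (u+2))⁻¹ * lam (u+2)))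
                  * (RatFunc.X ^ k * Qfun a b lam c (u+2)) := by
            rw [hf, Qsolve_succ a b lam c hR k u]
            simp only [map_neg]
            ring
          rw [Lcomb5 a b lam c ℒ f _ _ _ _ _ _ _ _ _ _
            (X_pow_mul_Q_mem a b lam c (k+1) (u+1)) (X_pow_mul_Q_mem a b lam c k u)
            (X_pow_mul_Q_mem a b lam c k (u+1)) (X_pow_mul_Q_mem a b lam c (k+1) (u+2))
            (X_pow_mul_Q_mem a b lam c k (u+2)) hf']
          rw [IH (k+1) (by omega) (u+1) _ rfl, IH k (by omega) u _ rfl,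
            IH k (by omega) (u+1) _ rfl, IH (k+1) (by omega) (u+2) _ rfl,
            IH k (by omega) (u+2) _ rfl]
          have hrec := RIIAux.L2b a b lam c hsum k 0 u
          show _ = RIIAux.mu a b lam c (k+2) 0 (u+2)
          field_simp
          linear_combination hrec
  -- Step II : induction on r
  have main : ∀ r n s : ℕ, ∀ f : Wspace a b lam c,
      (f : RatFunc ℂ) = RatFunc.X ^ n *
          algebraMap (Polynomial ℂ) (RatFunc ℂ) (Ppoly a b lam c r) * Qfun a b lam c s →
      ℒ f = RIIAux.mu a b lam c n r s := by
    intro r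
    induction r using Nat.strong_induction_on with
    | _ r IH =>
      intro n s f hf
      rcases r with _ | r1
      · exact T0 n s f (by rw [hf, pi_P0, mul_one])
      rcases r1 with _ | m
      · -- r = 1
        have hf' : (f : RatFunc ℂ)
            = algebraMap ℂ (RatFunc ℂ) 1 * (RatFunc.X ^ (n+1) * Qfun a b lam c s)
              + algebraMap ℂ (RatFunc ℂ) (-(b 0)) * (RatFunc.X ^ n * Qfun a b lam c s)
              + algebraMap ℂ (RatFunc ℂ) 0 * (RatFunc.X ^ 0 * Qfun a b lam c 0)
              + algebraMap ℂ (RatFunc ℂ) 0 * (RatFunc.X ^ 0 * Qfun a b lam c 0)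
              + algebraMap ℂ (RatFunc ℂ) 0 * (RatFunc.X ^ 0 * Qfun a b lam c 0) := by
          rw [hf, Pdecomp1 a b lam c n (Qfun a b lam c s)]
          simp only [map_neg, map_zero, map_one]
          ring
        rw [Lcomb5 a b lam c ℒ f _ _ _ _ _ _ _ _ _ _
          (X_pow_mul_Q_mem a b lam c (n+1) s) (X_pow_mul_Q_mem a b lam c n s)
          (X_pow_mul_Q_mem a b lam c 0 0) (X_pow_mul_Q_mem a b lam c 0 0)
          (X_pow_mul_Q_mem a b lam c 0 0) hf']
        rw [T0 (n+1) s _ rfl, T0 n s _ rfl]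
        have hrec := RIIAux.L1a a b lam c hsum n s
        show _ = RIIAux.mu a b lam c n 1 s
        linear_combination hrec
      · -- r = m + 2
        have hf' : (f : RatFunc ℂ)
            = algebraMap ℂ (RatFunc ℂ) 1
                * (RatFunc.X ^ (n+1) * π (Ppoly a b lam c (m+1)) * Qfun a b lam c s)
              + algebraMap ℂ (RatFunc ℂ) (-(b (m+1)))
                * (RatFunc.X ^ n * π (Ppoly a b lam c (m+1)) * Qfun a b lam c s)
              + algebraMap ℂ (RatFunc ℂ) (-(c (m+1)))
                * (RatFunc.X ^ (n+2) * π (Ppoly a b lam c m) * Qfun a b lam c s)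
              + algebraMap ℂ (RatFunc ℂ) (-(a (m+1)))
                * (RatFunc.X ^ (n+1) * π (Ppoly a b lam c m) * Qfun a b lam c s)
              + algebraMap ℂ (RatFunc ℂ) (-(lam (m+1)))
                * (RatFunc.X ^ n * π (Ppoly a b lam c m) * Qfun a b lam c s) := by
          rw [hf, Pdecomp2 a b lam c n m (Qfun a b lam c s)]
          simp only [map_neg, map_one]
          ring
        rw [Lcomb5 a b lam c ℒ f _ _ _ _ _ _ _ _ _ _
          (XPQ_mem a b lam c (n+1) (m+1) s) (XPQ_mem a b lam c n (m+1) s)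
          (XPQ_mem a b lam c (n+2) m s) (XPQ_mem a b lam c (n+1) m s)
          (XPQ_mem a b lam c n m s) hf']
        rw [IH (m+1) (by omega) (n+1) s _ rfl, IH (m+1) (by omega) n s _ rfl,
          IH m (by omega) (n+2) s _ rfl, IH m (by omega) (n+1) s _ rfl,
          IH m (by omega) n s _ rfl]
        have hrec := RIIAux.L1b a b lam c hsum n m s
        show _ = RIIAux.mu a b lam c n (m+2) s
        linear_combination hrec
  intro n r s f hf
  exact main r n s f hf
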